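/- There exist constants such that for all real a, b and σ > 0, the total variation distance between N(a, σ²) and N(b, σ²) satisfies 0.78 · min{|a − b|/(√(2π)σ), 1} ≤ ‖N(a,σ²) − N(b,σ²)‖_TV ≤ min{|a − b|/(√(2π)σ), 1}. -/

import Mathlib

open MeasureTheory ProbabilityTheory Real

noncomputable def tvDist {E : Type*} [MeasurableSpace E] (P Q : Measure E) : ℝ :=
  ⨆ A : {s : Set E // MeasurableSet s}, ((P A).toReal - (Q A).toReal)

/-!
Both Gaussians are images of `N(±s, 1)`, `s = |a - b| / (2σ)`, under the affine map
`x ↦ σx + (a + b)/2`, and total variation is invariant under measurable embeddings. By Scheffé's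
identity the supremum defining it is attained on the half-line where one density dominates the
other, so the distance is the standard normal mass of `[-s, s]`. That mass is at most `1` and at
most `2s` times the peak density `1/√(2π)`. From below, integrating the alternating Taylor bound
`exp (-w) ≥ 1 - w + w²/2 - w³/6` over `[-r, r]`, `r = min s √(π/2)`, gives `2r/√(2π)` times a
polynomial in `r²` that stays above `0.78` as long as `r² ≤ π/2`.
-/

open scoped NNReal

section tvDist

variable {E : Type*} [MeasurableSpace E]

lemma tvDist_comm (P Q : Measure E) [IsProbabilityMeasure P] [IsProbabilityMeasure Q] :
    tvDist P Q = tvDist Q P := by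
  have hcompl : Function.Surjective
      fun A : {s : Set E // MeasurableSet s} ↦
        (⟨Aᶜ, A.2.compl⟩ : {s : Set E // MeasurableSet s}) :=
    fun A ↦ ⟨⟨Aᶜ, A.2.compl⟩, by simp⟩
  rw [tvDist, tvDist, ← hcompl.iSup_comp]
  congr 1 with A
  simp only [← measureReal_def, probReal_compl_eq_one_sub A.2]
  ring

lemma tvDist_map {F : Type*} [MeasurableSpace F] {f : E → F} (hf : MeasurableEmbedding f)
    (P Q : Measure E) : tvDist (P.map f) (Q.map f) = tvDist P Q := by
  have hpre : Function.Surjective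
      fun A : {s : Set F // MeasurableSet s} ↦
        (⟨f ⁻¹' A, hf.measurable A.2⟩ : {s : Set E // MeasurableSet s}) :=
    fun B ↦ ⟨⟨f '' B, hf.measurableSet_image' B.2⟩, by simp [hf.injective.preimage_image]⟩
  rw [tvDist, tvDist, ← hpre.iSup_comp]
  simp only [hf.map_apply]

lemma tvDist_eq_of_restrict_le (P Q : Measure E) [IsFiniteMeasure P] [IsFiniteMeasure Q]
    {S : Set E} (hS : MeasurableSet S) (hQP : Q.restrict S ≤ P.restrict S)
    (hPQ : P.restrict Sᶜ ≤ Q.restrict Sᶜ) : tvDist P Q = P.real S - Q.real S := by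
  have hle : ∀ A, MeasurableSet A → P.real A - Q.real A ≤ P.real S - Q.real S := by
    intro A hA
    have hout : P.real (A \ S) ≤ Q.real (A \ S) := by
      have h := hPQ (A \ S)
      rw [Measure.restrict_eq_self _ (Set.sdiff_subset_compl _ _),
        Measure.restrict_eq_self _ (Set.sdiff_subset_compl _ _)] at h
      exact ENNReal.toReal_mono (measure_ne_top _ _) h
    have hin : Q.real (S \ A) ≤ P.real (S \ A) := by
      have h := hQP (S \ A)
      rw [Measure.restrict_eq_self _ Set.sdiff_subset,
        Measure.restrict_eq_self _ Set.sdiff_subset] at h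
      exact ENNReal.toReal_mono (measure_ne_top _ _) h
    have hPA := measureReal_inter_add_sdiff (μ := P) (s := A) hS
    have hQA := measureReal_inter_add_sdiff (μ := Q) (s := A) hS
    have hPS := measureReal_inter_add_sdiff (μ := P) (s := S) hA
    have hQS := measureReal_inter_add_sdiff (μ := Q) (s := S) hA
    rw [Set.inter_comm] at hPS hQS
    linarith
  refine le_antisymm (ciSup_le fun A ↦ hle A A.2) ?_
  exact le_ciSup (f := fun A : {s : Set E // MeasurableSet s} ↦ P.real A - Q.real A)
    ⟨_, Set.forall_mem_range.2 fun A ↦ hle A A.2⟩ ⟨S, hS⟩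

end tvDist

lemma gaussianPDFReal_le_of_abs_sub_le {μ μ' x : ℝ} (v : ℝ≥0) (h : |x - μ| ≤ |x - μ'|) :
    gaussianPDFReal μ' v x ≤ gaussianPDFReal μ v x := by
  rw [gaussianPDFReal, gaussianPDFReal]
  gcongr (_ * rexp ?_)
  exact div_le_div_of_nonneg_right (neg_le_neg (sq_le_sq.2 h)) (by positivity)

lemma gaussianReal_restrict_le {μ μ' : ℝ} {v : ℝ≥0} (hv : v ≠ 0) {S : Set ℝ}
    (hS : MeasurableSet S) (h : ∀ x ∈ S, |x - μ| ≤ |x - μ'|) :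
    (gaussianReal μ' v).restrict S ≤ (gaussianReal μ v).restrict S := by
  rw [gaussianReal_of_var_ne_zero _ hv, gaussianReal_of_var_ne_zero _ hv,
    restrict_withDensity hS, restrict_withDensity hS]
  exact withDensity_mono <| (ae_restrict_iff' hS).2 <| ae_of_all _ fun x hx ↦
    ENNReal.ofReal_le_ofReal (gaussianPDFReal_le_of_abs_sub_le v (h x hx))

lemma gaussianReal_real_Ioi (μ : ℝ) (v : ℝ≥0) (c : ℝ) :
    (gaussianReal μ v).real (Set.Ioi c) = (gaussianReal 0 v).real (Set.Ioi (c - μ)) := by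
  have hshift := gaussianReal_map_add_const (μ := 0) (v := v) μ
  rw [zero_add] at hshift
  rw [← hshift, measureReal_def, (measurableEmbedding_addRight μ).map_apply,
    Set.preimage_add_const_Ioi, measureReal_def]

lemma tvDist_gaussianReal_neg_eq_intervalIntegral {s : ℝ} (hs : 0 ≤ s) {v : ℝ≥0} (hv : v ≠ 0) :
    tvDist (gaussianReal s v) (gaussianReal (-s) v) = ∫ x in -s..s, gaussianPDFReal 0 v x := by
  rw [tvDist_eq_of_restrict_le _ _ measurableSet_Ioi
    (gaussianReal_restrict_le hv measurableSet_Ioi fun x hx ↦ ?_)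
    (gaussianReal_restrict_le hv measurableSet_Ioi.compl fun x hx ↦ ?_)]
  · rw [gaussianReal_real_Ioi s, gaussianReal_real_Ioi (-s), zero_sub, zero_sub, neg_neg,
      ← measureReal_sdiff (Set.Ioi_subset_Ioi (by linarith)) measurableSet_Ioi, Set.Ioi_sdiff_Ioi,
      intervalIntegral.integral_of_le (by linarith), measureReal_def,
      gaussianReal_apply_eq_integral _ hv, ENNReal.toReal_ofReal
        (setIntegral_nonneg measurableSet_Ioc fun x _ ↦ gaussianPDFReal_nonneg 0 v x)]
  · rw [Set.mem_Ioi] at hx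
    rw [sub_neg_eq_add, abs_of_pos (by linarith : 0 < x + s)]
    exact abs_le.2 ⟨by linarith, by linarith⟩
  · rw [Set.mem_compl_iff, Set.mem_Ioi, not_lt] at hx
    rw [sub_neg_eq_add, abs_of_nonpos (by linarith : x - s ≤ 0)]
    exact abs_le.2 ⟨by linarith, by linarith⟩

lemma gaussianReal_map_const_mul_add (μ : ℝ) (v : ℝ≥0) (c y : ℝ) :
    (gaussianReal μ v).map (fun x ↦ c * x + y) =
      gaussianReal (c * μ + y) ((c ^ 2).toNNReal * v) := by
  change (gaussianReal μ v).map ((· + y) ∘ (c * ·)) = _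
  rw [← Measure.map_map (measurable_add_const y) (measurable_const_mul c),
    gaussianReal_map_const_mul, gaussianReal_map_add_const,
    Real.toNNReal_of_nonneg (sq_nonneg c)]

lemma tvDist_gaussianReal_eq_intervalIntegral (a b : ℝ) {σ : ℝ} (hσ : 0 < σ) :
    tvDist (gaussianReal a (σ ^ 2).toNNReal) (gaussianReal b (σ ^ 2).toNNReal) =
      ∫ x in -(|a - b| / (2 * σ))..(|a - b| / (2 * σ)), gaussianPDFReal 0 1 x := by
  wlog hab : b ≤ a generalizing a b
  · rw [tvDist_comm, abs_sub_comm]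
    exact this b a (le_of_not_ge hab)
  set s := |a - b| / (2 * σ)
  have hσs : σ * s = (a - b) / 2 := by
    simp only [s, abs_of_nonneg (sub_nonneg.2 hab)]
    field_simp
  have hmap : ∀ μ, (gaussianReal μ 1).map (fun x ↦ σ * x + (a + b) / 2) =
      gaussianReal (σ * μ + (a + b) / 2) (σ ^ 2).toNNReal := fun μ ↦ by
    rw [gaussianReal_map_const_mul_add, mul_one]
  have hemb : MeasurableEmbedding (fun x ↦ σ * x + (a + b) / 2) :=
    (measurableEmbedding_addRight _).comp (measurableEmbedding_mulLeft₀ hσ.ne')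
  have ha : σ * s + (a + b) / 2 = a := by linarith
  have hb : σ * -s + (a + b) / 2 = b := by linarith [mul_neg σ s]
  rw [← tvDist_gaussianReal_neg_eq_intervalIntegral (by positivity) one_ne_zero,
    ← tvDist_map hemb (gaussianReal s 1), hmap, hmap, ha, hb]

lemma gaussianPDFReal_le_inv_sqrt (μ : ℝ) (v : ℝ≥0) (x : ℝ) :
    gaussianPDFReal μ v x ≤ (√(2 * π * v))⁻¹ := by
  rw [gaussianPDFReal]
  refine mul_le_of_le_one_right (by positivity) (exp_le_one_iff.2 ?_)
  exact div_nonpos_of_nonpos_of_nonneg (neg_nonpos.2 (sq_nonneg _)) (by positivity)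

lemma intervalIntegral_gaussianPDFReal_le_sub_div {a b : ℝ} (hab : a ≤ b) (μ : ℝ) (v : ℝ≥0) :
    ∫ x in a..b, gaussianPDFReal μ v x ≤ (b - a) / √(2 * π * v) := by
  calc ∫ x in a..b, gaussianPDFReal μ v x ≤ ∫ _ in a..b, (√(2 * π * v))⁻¹ :=
        intervalIntegral.integral_mono_on hab (integrable_gaussianPDFReal μ v).intervalIntegrable
          intervalIntegrable_const fun x _ ↦ gaussianPDFReal_le_inv_sqrt μ v x
    _ = (b - a) / √(2 * π * v) := by
        rw [intervalIntegral.integral_const, smul_eq_mul, div_eq_mul_inv]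

lemma intervalIntegral_gaussianPDFReal_le_one {a b : ℝ} (hab : a ≤ b) (μ : ℝ) {v : ℝ≥0}
    (hv : v ≠ 0) : ∫ x in a..b, gaussianPDFReal μ v x ≤ 1 := by
  rw [intervalIntegral.integral_of_le hab, ← integral_gaussianPDFReal_eq_one μ hv]
  exact setIntegral_le_integral (integrable_gaussianPDFReal μ v)
    (ae_of_all _ (gaussianPDFReal_nonneg μ v))

lemma exp_neg_le_quadratic_of_nonneg {w : ℝ} (hw : 0 ≤ w) : exp (-w) ≤ 1 - w + w ^ 2 / 2 := by
  have hderiv : ∀ x, HasDerivAt (fun w ↦ 1 - w + w ^ 2 / 2 - exp (-w)) (x - 1 + exp (-x)) x :=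
    fun x ↦ ((((hasDerivAt_id x).const_sub 1).add ((hasDerivAt_pow 2 x).div_const 2)).sub
      (hasDerivAt_neg x).exp).congr_deriv
      (by simp only [Nat.cast_ofNat, Nat.add_one_sub_one]; ring)
  have hmono := monotoneOn_of_hasDerivWithinAt_nonneg (convex_Ici 0)
    (fun x _ ↦ (hderiv x).continuousAt.continuousWithinAt)
    (fun x _ ↦ (hderiv x).hasDerivWithinAt)
    (fun x _ ↦ by linarith [add_one_le_exp (-x)])
  simpa using hmono Set.self_mem_Ici hw hw

lemma cubic_le_exp_neg_of_nonneg {w : ℝ} (hw : 0 ≤ w) :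
    1 - w + w ^ 2 / 2 - w ^ 3 / 6 ≤ exp (-w) := by
  have hderiv : ∀ x, HasDerivAt (fun w ↦ exp (-w) - (1 - w + w ^ 2 / 2 - w ^ 3 / 6))
      (1 - x + x ^ 2 / 2 - exp (-x)) x :=
    fun x ↦ ((hasDerivAt_neg x).exp.sub ((((hasDerivAt_id x).const_sub 1).add
      ((hasDerivAt_pow 2 x).div_const 2)).sub ((hasDerivAt_pow 3 x).div_const 6))).congr_deriv
      (by simp only [Nat.cast_ofNat, Nat.add_one_sub_one]; ring)
  have hmono := monotoneOn_of_hasDerivWithinAt_nonneg (convex_Ici 0)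
    (fun x _ ↦ (hderiv x).continuousAt.continuousWithinAt)
    (fun x _ ↦ (hderiv x).hasDerivWithinAt)
    (fun x hx ↦ by
      linarith [exp_neg_le_quadratic_of_nonneg (interior_subset hx : x ∈ Set.Ici 0)])
  simpa using hmono Set.self_mem_Ici hw hw

lemma gaussianPDFReal_zero_one (x : ℝ) :
    gaussianPDFReal 0 1 x = (√(2 * π))⁻¹ * exp (-(x ^ 2 / 2)) := by
  simp [gaussianPDFReal, neg_div]

lemma intervalIntegral_taylor_exp_neg_sq (r : ℝ) :
    ∫ x in -r..r, (1 - x ^ 2 / 2 + (x ^ 2 / 2) ^ 2 / 2 - (x ^ 2 / 2) ^ 3 / 6)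
      = 2 * r * (1 - r ^ 2 / 6 + r ^ 4 / 40 - r ^ 6 / 336) := by
  rw [intervalIntegral.integral_eq_sub_of_hasDerivAt
    (f := fun x ↦ x - x ^ 3 / 6 + x ^ 5 / 40 - x ^ 7 / 336) (fun x _ ↦ ?_)
    ((by fun_prop : Continuous _).intervalIntegrable _ _)]
  · ring
  · exact ((((hasDerivAt_id x).sub ((hasDerivAt_pow 3 x).div_const 6)).add
      ((hasDerivAt_pow 5 x).div_const 40)).sub ((hasDerivAt_pow 7 x).div_const 336)).congr_deriv
      (by simp only [Nat.cast_ofNat, Nat.add_one_sub_one]; ring)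

lemma le_intervalIntegral_gaussianPDFReal_of_sq_le {r : ℝ} (hr : 0 ≤ r) (hr2 : r ^ 2 ≤ π / 2) :
    0.78 * (2 * r / √(2 * π)) ≤ ∫ x in -r..r, gaussianPDFReal 0 1 x := by
  have hpoly : 0.78 ≤ 1 - r ^ 2 / 6 + r ^ 4 / 40 - r ^ 6 / 336 := by
    have hu : r ^ 2 ≤ 1.575 := by linarith [pi_lt_d2]
    nlinarith [pow_two_nonneg r, mul_nonneg (pow_two_nonneg r) (pow_two_nonneg r)]
  calc 0.78 * (2 * r / √(2 * π))
      ≤ 2 * r / √(2 * π) * (1 - r ^ 2 / 6 + r ^ 4 / 40 - r ^ 6 / 336) := by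
        rw [mul_comm]
        exact mul_le_mul_of_nonneg_left hpoly (by positivity)
    _ = ∫ x in -r..r,
          (√(2 * π))⁻¹ * (1 - x ^ 2 / 2 + (x ^ 2 / 2) ^ 2 / 2 - (x ^ 2 / 2) ^ 3 / 6) := by
        rw [intervalIntegral.integral_const_mul, intervalIntegral_taylor_exp_neg_sq]
        ring
    _ ≤ ∫ x in -r..r, gaussianPDFReal 0 1 x := by
        refine intervalIntegral.integral_mono_on (by linarith)
          ((by fun_prop : Continuous _).intervalIntegrable _ _)
          ((integrable_gaussianPDFReal 0 1).intervalIntegrable) fun x _ ↦ ?_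
        rw [gaussianPDFReal_zero_one]
        gcongr
        exact cubic_le_exp_neg_of_nonneg (by positivity)

lemma le_intervalIntegral_gaussianPDFReal {s : ℝ} (hs : 0 ≤ s) :
    0.78 * min (2 * s / √(2 * π)) 1 ≤ ∫ x in -s..s, gaussianPDFReal 0 1 x := by
  set r := min s √(π / 2)
  have hr : 0 ≤ r := le_min hs (sqrt_nonneg _)
  have hmin : min (2 * s / √(2 * π)) 1 = 2 * r / √(2 * π) := by
    have hq : 0 < √(π / 2) := sqrt_pos.2 (by positivity)
    rw [show 2 * π = 2 ^ 2 * (π / 2) by ring, sqrt_mul (by positivity), sqrt_sq zero_le_two,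
      mul_div_mul_left _ _ two_ne_zero, mul_div_mul_left _ _ two_ne_zero,
      ← min_div_div_right hq.le, div_self hq.ne']
  calc 0.78 * min (2 * s / √(2 * π)) 1 = 0.78 * (2 * r / √(2 * π)) := by rw [hmin]
    _ ≤ ∫ x in -r..r, gaussianPDFReal 0 1 x :=
        le_intervalIntegral_gaussianPDFReal_of_sq_le hr
          ((pow_le_pow_left₀ hr (min_le_right _ _) 2).trans (sq_sqrt (by positivity)).le)
    _ ≤ ∫ x in -s..s, gaussianPDFReal 0 1 x :=
        intervalIntegral.integral_mono_interval (by linarith [min_le_left s √(π / 2)])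
          (by linarith) (min_le_left _ _) (ae_of_all _ (gaussianPDFReal_nonneg 0 1))
          (integrable_gaussianPDFReal 0 1).intervalIntegrable

/-- `0.78 · min{|a−b|/(√(2π)σ), 1} ≤ ‖N(a,σ²) − N(b,σ²)‖_TV ≤ min{|a−b|/(√(2π)σ), 1}`. -/
theorem tv_gaussian_l1_bounds (a b : ℝ) (σ : ℝ) (hσ : 0 < σ) :
    0.78 * min (|a - b| / (Real.sqrt (2 * π) * σ)) 1
      ≤ tvDist (gaussianReal a (Real.toNNReal (σ ^ 2))) (gaussianReal b (Real.toNNReal (σ ^ 2)))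
    ∧ tvDist (gaussianReal a (Real.toNNReal (σ ^ 2))) (gaussianReal b (Real.toNNReal (σ ^ 2)))
      ≤ min (|a - b| / (Real.sqrt (2 * π) * σ)) 1 := by
  have hs : 0 ≤ |a - b| / (2 * σ) := by positivity
  have hmin : |a - b| / (√(2 * π) * σ) = 2 * (|a - b| / (2 * σ)) / √(2 * π) := by
    field_simp
  rw [tvDist_gaussianReal_eq_intervalIntegral a b hσ, hmin]
  refine ⟨le_intervalIntegral_gaussianPDFReal hs, le_min ?_ ?_⟩
  · refine (intervalIntegral_gaussianPDFReal_le_sub_div (neg_le_self hs) 0 1).trans_eq ?_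
    rw [NNReal.coe_one, mul_one, sub_neg_eq_add, ← two_mul]
  · exact intervalIntegral_gaussianPDFReal_le_one (neg_le_self hs) 0 one_ne_zero
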